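/- Let P₁, …, P_d : ℝ₊^k → ℝ₊ be monomials with coefficient 1 and exponent matrix 𝕄 having no zero columns, and let {i₁,…,i_r} index linearly independent rows. There exists N₀ ≥ 2 such that whenever s ∈ ℝ₊^k satisfies min_i s_i ≥ 1 and max_i s_i ≥ 2^{N₀}, then (P_{i₁}(s), …, P_{i_r}(s)) ∉ [1,2]^r. -/
import Mathlib


open Set

/-- Large parameters escape `[1,2]^r`: if the exponent matrix of the monomials has no zero
columns and `{i₁,…,i_r}` indexes linearly independent rows spanning the row space, then there
is `N₀ ≥ 2` such that `min_i s_i ≥ 1` and `max_i s_i ≥ 2^{N₀}` force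
`(P_{i₁}(s),…,P_{i_r}(s)) ∉ [1,2]^r`. -/
theorem stmt6 (d k r : ℕ) (hd : 0 < d) (hk : 0 < k) (hr : 0 < r)
    (α : Fin d → Fin k → ℕ)
    (hcol : ∀ j : Fin k, ∃ i : Fin d, α i j ≠ 0)
    (idx : Fin r → Fin d)
    (hind : LinearIndependent ℝ (fun m : Fin r => (fun j => (α (idx m) j : ℝ) : Fin k → ℝ)))
    (hspan : ∀ i : Fin d, (fun j => (α i j : ℝ) : Fin k → ℝ) ∈
      Submodule.span ℝ (Set.range (fun m : Fin r => (fun j => (α (idx m) j : ℝ) : Fin k → ℝ)))) :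
    ∃ N₀ : ℕ, 2 ≤ N₀ ∧ ∀ s : Fin k → ℝ, (∀ j, 1 ≤ s j) → (∃ j, (2 : ℝ) ^ N₀ ≤ s j) →
      ∃ m : Fin r, (∏ j, s j ^ α (idx m) j) ∉ Set.Icc (1 : ℝ) 2 := by
  refine ⟨2, le_refl 2, fun s hs1 ⟨j, hj⟩ => ?_⟩
  -- find a selected row with nonzero entry in column j
  obtain ⟨i, hi⟩ := hcol j
  have hm : ∃ m : Fin r, α (idx m) j ≠ 0 := by
    by_contra h
    push_neg at h
    have hker : Set.range (fun m : Fin r => (fun j' => (α (idx m) j' : ℝ) : Fin k → ℝ)) ⊆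
        (LinearMap.ker (LinearMap.proj j : (Fin k → ℝ) →ₗ[ℝ] ℝ) : Submodule ℝ (Fin k → ℝ)) := by
      rintro _ ⟨m, rfl⟩
      simp [LinearMap.mem_ker, h m]
    have := (Submodule.span_le.mpr hker) (hspan i)
    simp only [LinearMap.mem_ker, LinearMap.proj_apply] at this
    exact hi (by exact_mod_cast this)
  obtain ⟨m, hm⟩ := hm
  refine ⟨m, fun hmem => ?_⟩
  have h1 : ∀ j' ∈ Finset.univ, (1 : ℝ) ≤ s j' ^ α (idx m) j' :=
    fun j' _ => one_le_pow₀ (hs1 j')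
  have h2 : s j ^ α (idx m) j ≤ ∏ j', s j' ^ α (idx m) j' := by
    rw [← Finset.mul_prod_erase Finset.univ _ (Finset.mem_univ j)]
    have hrest : (1 : ℝ) ≤ ∏ j' ∈ Finset.univ.erase j, s j' ^ α (idx m) j' := by
      calc (1 : ℝ) = ∏ _j' ∈ Finset.univ.erase j, (1 : ℝ) := by simp
        _ ≤ _ := Finset.prod_le_prod (fun _ _ => zero_le_one)
            (fun j' _ => h1 j' (Finset.mem_univ j'))
    nlinarith [h1 j (Finset.mem_univ j)]
  have h3 : s j ≤ s j ^ α (idx m) j :=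
    le_self_pow₀ (hs1 j) hm
  have : (4 : ℝ) ≤ ∏ j', s j' ^ α (idx m) j' := by
    have : (2:ℝ)^2 = 4 := by norm_num
    linarith [hj, h2, h3]
  linarith [hmem.2]
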